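/- Assume ω₁ < 𝔟, i.e., every subset B ⊆ ω^ω of cardinality at most ℵ₁ is dominated by a countable set: there exists a countable C ⊆ ω^ω such that every f ∈ B satisfies f ≤ g for some g ∈ C. If X is a uniform space whose uniformity is ω-narrow and has a 𝔊-base, then the countable power X^ω (with the product topology) is weakly cosmic. -/

import Mathlib

/-- A subset `S` of a topological space is weakly separated if every `x ∈ S` has an open
neighborhood `O x` such that for distinct `x, y ∈ S` either `x ∉ O y` or `y ∉ O x`. -/
def WeaklySeparated {X : Type*} [TopologicalSpace X] (S : Set X) : Prop :=
  ∃ O : X → Set X, (∀ x ∈ S, IsOpen (O x) ∧ x ∈ O x) ∧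
    ∀ x ∈ S, ∀ y ∈ S, x ≠ y → x ∉ O y ∨ y ∉ O x

/-- A topological space is weakly cosmic if it has no uncountable weakly separated subset. -/
def WeaklyCosmic (X : Type*) [TopologicalSpace X] : Prop :=
  ∀ S : Set X, WeaklySeparated S → S.Countable

/-
It suffices that a weakly separated set `S ⊆ Y` of size at most `ℵ₁` is countable. Choose for
each `x ∈ S` a `𝔊`-base index `α x` whose ball around `x` lies in the witness neighbourhood `O x`.
Since `ω₁ < 𝔟`, the `α x` are dominated by a countable set of indices, and ω-narrowness gives,
for each of them, a countable colouring of `Y` in which equally coloured points are close.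
Equally coloured points of `S` lie in each other's witness neighbourhoods, so the colouring is
injective on `S`. Both ω-narrowness and `𝔊`-bases pass to `ℕ → X`, which gives the theorem.
-/

open Filter Set Cardinal
open scoped Uniformity

universe u

def OmegaNarrow (Y : Type*) [UniformSpace Y] : Prop :=
  ∀ U ∈ 𝓤 Y, ∃ C : Set Y, C.Countable ∧ ∀ x : Y, ∃ c ∈ C, (c, x) ∈ U

def HasGBase (Y : Type*) [UniformSpace Y] : Prop :=
  ∃ U : (ℕ → ℕ) → Set (Y × Y), (∀ α, U α ∈ 𝓤 Y) ∧ (∀ V ∈ 𝓤 Y, ∃ α, U α ⊆ V) ∧ Antitone U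

theorem WeaklySeparated.mono {X : Type*} [TopologicalSpace X] {S T : Set X}
    (hS : WeaklySeparated S) (hTS : T ⊆ S) : WeaklySeparated T := by
  obtain ⟨O, hO, hsep⟩ := hS
  exact ⟨O, fun x hx => hO x (hTS hx), fun x hx y hy => hsep x (hTS hx) y (hTS hy)⟩

theorem weaklyCosmic_of_forall_mk_le_aleph_one {X : Type*} [TopologicalSpace X]
    (h : ∀ S : Set X, WeaklySeparated S → #S ≤ ℵ₁ → S.Countable) : WeaklyCosmic X := by
  intro S hS
  by_contra hSc
  have hS₁ : ℵ₁ ≤ #S := aleph_one_le_iff.mpr (not_le.mp (mt le_aleph0_iff_set_countable.mp hSc))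
  obtain ⟨T, hTS, hT⟩ := le_mk_iff_exists_subset.mp hS₁
  have hT₀ := le_aleph0_iff_set_countable.mpr (h T (hS.mono hTS) hT.le)
  exact aleph0_lt_aleph_one.not_ge (hT ▸ hT₀)

theorem omegaNarrow_iff_exists_coloring {Y : Type*} [UniformSpace Y] :
    OmegaNarrow Y ↔ ∀ U ∈ 𝓤 Y, ∃ f : Y → ℕ, ∀ x y, f x = f y → (x, y) ∈ U := by
  constructor
  · intro hY U hU
    obtain ⟨W, hW, hWsymm, hWU⟩ := comp_symm_mem_uniformity_sets hU
    obtain ⟨C, hC, hcover⟩ := hY W hW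
    choose c hcC hc using hcover
    have := hC.to_subtype
    obtain ⟨e, he⟩ := exists_injective_nat C
    refine ⟨fun x => e ⟨c x, hcC x⟩, fun x y hxy => hWU ?_⟩
    have hcxy : c x = c y := congrArg Subtype.val (he hxy)
    exact SetRel.prodMk_mem_comp (hWsymm.symm _ _ (hc x)) (hcxy ▸ hc y)
  · intro h U hU
    obtain ⟨f, hf⟩ := h U hU
    refine ⟨range (rangeSplitting f), countable_range _, fun x => ?_⟩
    exact ⟨_, mem_range_self ⟨f x, x, rfl⟩, hf _ _ (apply_rangeSplitting f _)⟩

theorem exists_finset_subset_of_mem_uniformity_pi {ι X : Type*} [UniformSpace X]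
    {V : Set ((ι → X) × (ι → X))} (hV : V ∈ 𝓤 (ι → X)) :
    ∃ F : Finset ι, ∃ W ∈ 𝓤 X, {p : (ι → X) × (ι → X) | ∀ i ∈ F, (p.1 i, p.2 i) ∈ W} ⊆ V := by
  rw [Pi.uniformity] at hV
  obtain ⟨⟨I, W⟩, ⟨hI, hW⟩, hWV⟩ := (HasBasis.iInf' fun i => (𝓤 X).basis_sets.comap
    fun p : (ι → X) × (ι → X) => (p.1 i, p.2 i)).mem_iff.mp hV
  refine ⟨hI.toFinset, ⋂ i ∈ I, W i, (biInter_mem hI).mpr hW, fun p hp => hWV ?_⟩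
  exact mem_iInter₂.mpr fun i hi => mem_iInter₂.mp (hp i (hI.mem_toFinset.mpr hi)) i hi

theorem OmegaNarrow.pi {ι X : Type*} [UniformSpace X] (hX : OmegaNarrow X) :
    OmegaNarrow (ι → X) := by
  rw [omegaNarrow_iff_exists_coloring] at hX ⊢
  intro V hV
  obtain ⟨F, W, hW, hWV⟩ := exists_finset_subset_of_mem_uniformity_pi hV
  obtain ⟨f, hf⟩ := hX W hW
  obtain ⟨e, he⟩ := exists_injective_nat (F → ℕ)
  refine ⟨fun x => e fun i => f (x i), fun x y hxy => hWV fun i hi => hf _ _ ?_⟩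
  exact congrFun (he hxy) ⟨i, hi⟩

-- The index `α` selects the coordinates `n < α 0` and the entourage `U (α ∘ Nat.succ)` on them.
theorem HasGBase.pi_nat {X : Type*} [UniformSpace X] (hX : HasGBase X) : HasGBase (ℕ → X) := by
  obtain ⟨U, hU, hbase, hanti⟩ := hX
  refine ⟨fun α => {p | ∀ n < α 0, (p.1 n, p.2 n) ∈ U (α ∘ Nat.succ)}, fun α => ?_,
    fun V hV => ?_, fun α β hαβ p hp n hn => ?_⟩
  · exact (eventually_all_finite (finite_Iio (α 0))).mpr fun n _ =>
      Pi.uniformContinuous_proj (fun _ => X) n (hU _)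
  · obtain ⟨F, W, hW, hWV⟩ := exists_finset_subset_of_mem_uniformity_pi hV
    obtain ⟨β, hβ⟩ := hbase W hW
    obtain ⟨k, hk⟩ := F.exists_nat_subset_range
    refine ⟨fun | 0 => k | n + 1 => β n, fun p hp => hWV fun n hn => hβ (hp n ?_)⟩
    exact Finset.mem_range.mp (hk hn)
  · exact hanti (fun n => hαβ n.succ) (hp n (hn.trans_le (hαβ 0)))

theorem weaklyCosmic_of_omegaNarrow_of_hasGBase {Y : Type u} [UniformSpace Y]
    (hb : ∀ B : Set (ℕ → ℕ), #B ≤ ℵ₁ →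
      ∃ C : Set (ℕ → ℕ), C.Countable ∧ ∀ f ∈ B, ∃ g ∈ C, f ≤ g)
    (hY : OmegaNarrow Y) (hG : HasGBase Y) : WeaklyCosmic Y := by
  obtain ⟨U, hU, hbase, hanti⟩ := hG
  refine weaklyCosmic_of_forall_mk_le_aleph_one fun S ⟨O, hO, hsep⟩ hS => ?_
  have hball : ∀ x ∈ S, ∃ α, ∀ y, (x, y) ∈ U α → y ∈ O x := fun x hx => by
    obtain ⟨V, hV, hVO⟩ := UniformSpace.mem_nhds_iff.mp ((hO x hx).1.mem_nhds (hO x hx).2)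
    obtain ⟨α, hα⟩ := hbase V hV
    exact ⟨α, fun y hy => hVO (hα hy)⟩
  choose! α hα using hball
  have hαS : #(α '' S) ≤ ℵ₁ :=
    lift_le_aleph_one.mp (mk_image_le_lift.trans (lift_le_aleph_one.mpr hS))
  obtain ⟨C, hC, hdom⟩ := hb (α '' S) hαS
  choose! g hgC hαg using fun x hx => hdom (α x) (mem_image_of_mem α hx)
  choose f hf using fun γ => omegaNarrow_iff_exists_coloring.mp hY (U γ) (hU γ)
  set Φ : Y → (ℕ → ℕ) × ℕ := fun x => (g x, f (g x) x)
  have hmem : ∀ x ∈ S, ∀ y, Φ x = Φ y → y ∈ O x := fun x hx y hxy => by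
    obtain ⟨hg, hfxy⟩ := Prod.mk.inj hxy
    rw [← hg] at hfxy
    exact hα x hx y (hanti (hαg x hx) (hf _ x y hfxy))
  have hinj : InjOn Φ S := fun x hx y hy hxy => by
    by_contra hne
    exact (hsep x hx y hy hne).elim (· (hmem y hy x hxy.symm)) (· (hmem x hx y hxy))
  refine countable_of_injective_of_countable_image hinj ?_
  exact (hC.prod countable_univ).mono
    (image_subset_iff.mpr fun x hx => mk_mem_prod (hgC x hx) (mem_univ _))

/-- Assume `ω₁ < 𝔟`. If the uniformity of a uniform space `X` is ω-narrow and has a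
`𝔊`-base, then the countable power `X^ω` (with the product topology) is weakly cosmic. -/
theorem weaklyCosmic_pi_of_omegaNarrow_gBase
    {X : Type*} [UniformSpace X]
    (hb : ∀ B : Set (ℕ → ℕ), Cardinal.mk ↥B ≤ Cardinal.aleph 1 →
      ∃ C : Set (ℕ → ℕ), C.Countable ∧ ∀ f ∈ B, ∃ g ∈ C, f ≤ g)
    (hnarrow : ∀ U ∈ uniformity X, ∃ C : Set X, C.Countable ∧ ∀ x : X, ∃ c ∈ C, (c, x) ∈ U)
    (hG : ∃ U : (ℕ → ℕ) → Set (X × X), (∀ α, U α ∈ uniformity X) ∧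
      (∀ V ∈ uniformity X, ∃ α, U α ⊆ V) ∧ ∀ α β : ℕ → ℕ, α ≤ β → U β ⊆ U α) :
    WeaklyCosmic (ℕ → X) :=
  weaklyCosmic_of_omegaNarrow_of_hasGBase hb (OmegaNarrow.pi hnarrow) (HasGBase.pi_nat hG)
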